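/- arXiv:1902.00247 — 5 statements merged into one kernel-verified Lean document; each statement's English description precedes it below -/
import Mathlib

section
/- Let ξ_b be a random vector distributed uniformly on the unit ball {x ∈ ℝ^d : ‖x‖ ≤ 1} and let ξ = σ·ξ_b. Then for every unit vector v ∈ ℝ^d and every Borel set A ⊆ ℝ^d satisfying the (σ/(4√d), v)-narrow property, P(ξ ∈ A) ≤ 1/4; that is, ξ has the v-dispersive property for every unit vector v. -/
/-!
Rotate `v` to the first coordinate axis and slice the ball by lines parallel to it. A narrow set
meets each line in a set of length at most `q`, and only lines through `B_{d-1}` meet the ball, so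
by Fubini its volume is at most `q |B_{d-1}|`. On the other hand `B_d` contains the cylinder
`[-t, t] × (1 - t²)^{1/2} B_{d-1}`, and for `t² = 1/(2d)` Bernoulli's inequality gives
`|B_{d-1}| ≤ √d |B_d|`. With `q = 1/(4√d)` (after scaling by `σ`) this is `1/4` of the ball.
-/

open MeasureTheory Set Metric
open scoped ENNReal

def IsNarrow {E : Type*} [AddCommGroup E] [Module ℝ E] (q : ℝ) (v : E) (A : Set E) : Prop :=
  ∀ u ∈ A, ∀ r : ℝ, q ≤ r → u + r • v ∉ A

namespace IsNarrow

variable {E F : Type*} [AddCommGroup E] [Module ℝ E] [AddCommGroup F] [Module ℝ F]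
  {q : ℝ} {v : E} {A : Set E}

theorem mono {B : Set E} (h : IsNarrow q v A) (hBA : B ⊆ A) : IsNarrow q v B :=
  fun u hu r hr hmem => h u (hBA hu) r hr (hBA hmem)

theorem preimage (h : IsNarrow q v A) (f : F →ₗ[ℝ] E) {w : F} {c q' : ℝ} (hc : 0 ≤ c)
    (hfw : f w = c • v) (hq : q ≤ c * q') : IsNarrow q' w (f ⁻¹' A) := by
  intro u hu r hr hmem
  refine h (f u) hu (c * r) (hq.trans (by gcongr)) ?_
  simpa [hfw, smul_smul, mul_comm] using hmem

theorem volume_le {s : Set ℝ} (h : IsNarrow q 1 s) : volume s ≤ ENNReal.ofReal q := by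
  refine (Real.volume_le_diam s).trans (ediam_le fun t ht t' ht' => ?_)
  have hlt : ∀ x ∈ s, ∀ y ∈ s, x - y < q := fun x hx y hy => by
    by_contra! hle
    exact h y hy (x - y) hle (by simpa using hx)
  rw [edist_dist, Real.dist_eq]
  exact ENNReal.ofReal_le_ofReal (abs_sub_le_iff.2 ⟨(hlt t ht t' ht').le, (hlt t' ht' t ht).le⟩)

theorem volume_prod_le [MeasurableSpace F] {ν : Measure F} [SFinite ν] {T : Set (ℝ × F)}
    {B : Set F} (h : IsNarrow q (1, 0) T) (hT : MeasurableSet T) (hTB : T ⊆ univ ×ˢ B) :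
    volume.prod ν T ≤ ENNReal.ofReal q * ν B := by
  rw [Measure.prod_apply_symm hT]
  refine (lintegral_mono fun y => ?_).trans (lintegral_indicator_const_le B _)
  by_cases hy : y ∈ B
  · rw [indicator_of_mem hy]
    refine volume_le fun x hx r hr hmem => h _ hx r hr ?_
    simpa using hmem
  · have : (fun x => (x, y)) ⁻¹' T = ∅ :=
      eq_empty_of_forall_notMem fun x hx => hy (hTB hx).2
    simp [this]

end IsNarrow

noncomputable def finConsEuclidean (n : ℕ) :
    (ℝ × EuclideanSpace ℝ (Fin n)) ≃L[ℝ] EuclideanSpace ℝ (Fin (n + 1)) :=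
  ((ContinuousLinearEquiv.refl ℝ ℝ).prodCongr (EuclideanSpace.equiv (Fin n) ℝ)).trans
    ((Fin.consEquivL ℝ fun _ => ℝ).trans (EuclideanSpace.equiv (Fin (n + 1)) ℝ).symm)

namespace finConsEuclidean

variable {n : ℕ}

@[simp] theorem apply_zero (p : ℝ × EuclideanSpace ℝ (Fin n)) :
    finConsEuclidean n p 0 = p.1 := rfl

@[simp] theorem apply_succ (p : ℝ × EuclideanSpace ℝ (Fin n)) (j : Fin n) :
    finConsEuclidean n p j.succ = p.2 j := rfl

theorem norm_sq (p : ℝ × EuclideanSpace ℝ (Fin n)) :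
    ‖finConsEuclidean n p‖ ^ 2 = p.1 ^ 2 + ‖p.2‖ ^ 2 := by
  simp [EuclideanSpace.real_norm_sq_eq, Fin.sum_univ_succ]

theorem measurePreserving : MeasurePreserving (finConsEuclidean n) := by
  have hcons : MeasurePreserving
      (fun p : ℝ × (Fin n → ℝ) => (Fin.cons p.1 p.2 : Fin (n + 1) → ℝ)) := by
    convert (volume_preserving_piFinSuccAbove (fun _ : Fin (n + 1) => ℝ) 0).symm using 1
    ext p i
    simp [MeasurableEquiv.piFinSuccAbove]
  exact (PiLp.volume_preserving_toLp _).comp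
    (hcons.comp ((MeasurePreserving.id volume).prod (PiLp.volume_preserving_ofLp _)))

end finConsEuclidean

theorem IsNarrow.volume_le_mul_volume_closedBall {n : ℕ} {q : ℝ}
    {v : EuclideanSpace ℝ (Fin (n + 1))} {S : Set (EuclideanSpace ℝ (Fin (n + 1)))}
    (h : IsNarrow q v S) (hv : ‖v‖ = 1) (hS : MeasurableSet S) (hSB : S ⊆ closedBall 0 1) :
    volume S ≤ ENNReal.ofReal q * volume (closedBall (0 : EuclideanSpace ℝ (Fin n)) 1) := by
  set e₀ := EuclideanSpace.single (0 : Fin (n + 1)) (1 : ℝ)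
  let f := Submodule.reflection (ℝ ∙ (e₀ - v))ᗮ
  let g : ℝ × EuclideanSpace ℝ (Fin n) →L[ℝ] EuclideanSpace ℝ (Fin (n + 1)) :=
    f.toContinuousLinearEquiv.toContinuousLinearMap.comp (finConsEuclidean n : _ →L[ℝ] _)
  have hg : MeasurePreserving g := f.measurePreserving.comp finConsEuclidean.measurePreserving
  have hg₁ : g (1, 0) = v := by
    have : finConsEuclidean n (1, 0) = e₀ := by
      ext i
      induction i using Fin.cases <;> simp [e₀]
    simp only [g, ContinuousLinearMap.comp_apply, ContinuousLinearEquiv.coe_coe, this]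
    exact Submodule.reflection_sub (by simp [hv, e₀])
  have hgS : g ⁻¹' S ⊆ univ ×ˢ closedBall 0 1 := by
    intro p hp
    have hp1 : ‖f (finConsEuclidean n p)‖ ≤ 1 := mem_closedBall_zero_iff.1 (hSB hp)
    have := finConsEuclidean.norm_sq p
    rw [LinearIsometryEquiv.norm_map] at hp1
    refine ⟨trivial, mem_closedBall_zero_iff.2 ?_⟩
    nlinarith [norm_nonneg p.2, norm_nonneg (finConsEuclidean n p)]
  rw [← hg.measure_preimage hS.nullMeasurableSet, Measure.volume_eq_prod]
  exact (h.preimage g.toLinearMap zero_le_one (by simpa using hg₁) (by simp)).volume_prod_le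
    (hS.preimage hg.measurable) hgS

theorem one_le_succ_mul_four_mul_one_sub_pow {n : ℕ} {a : ℝ} (ha : 2 * (n + 1) * a = 1) :
    1 ≤ (n + 1) * (4 * a * (1 - a) ^ n) := by
  have hn : (0 : ℝ) ≤ n := n.cast_nonneg
  have ha₀ : 0 ≤ a := by nlinarith
  have h₂ : (n + 1) * (4 * a) = 2 := by linarith
  calc (1 : ℝ) ≤ (n + 1) * (4 * a) * (1 + n * -a) := by rw [h₂]; nlinarith
    _ ≤ (n + 1) * (4 * a) * (1 - a) ^ n := by
        gcongr
        simpa [sub_eq_add_neg] using one_add_mul_le_pow (a := -a) (by nlinarith) n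
    _ = (n + 1) * (4 * a * (1 - a) ^ n) := by ring

theorem volume_closedBall_le_sqrt_mul (n : ℕ) :
    volume (closedBall (0 : EuclideanSpace ℝ (Fin n)) 1) ≤
      ENNReal.ofReal √(n + 1) * volume (closedBall (0 : EuclideanSpace ℝ (Fin (n + 1))) 1) := by
  set a : ℝ := (2 * (n + 1))⁻¹
  have ha : 2 * (n + 1) * a = 1 := mul_inv_cancel₀ (by positivity)
  have ha₀ : 0 ≤ a := by positivity
  have ha₁ : a ≤ 1 := inv_le_one_of_one_le₀ (by linarith [n.cast_nonneg (α := ℝ)])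
  set t := √a
  set s := √(1 - a)
  have hts : t ^ 2 + s ^ 2 = 1 := by
    rw [Real.sq_sqrt ha₀, Real.sq_sqrt (by linarith)]; ring
  set X := Icc (-t) t ×ˢ closedBall (0 : EuclideanSpace ℝ (Fin n)) s
  have hX : X ⊆ finConsEuclidean n ⁻¹' closedBall 0 1 := by
    rintro p ⟨hp₁, hp₂⟩
    have h₁ : p.1 ^ 2 ≤ t ^ 2 := sq_le_sq' hp₁.1 hp₁.2
    have h₂ : ‖p.2‖ ^ 2 ≤ s ^ 2 := by
      gcongr; exact mem_closedBall_zero_iff.1 hp₂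
    have := finConsEuclidean.norm_sq p
    rw [mem_preimage, mem_closedBall_zero_iff]
    nlinarith [norm_nonneg (finConsEuclidean n p)]
  have hXvol : volume X = ENNReal.ofReal (2 * t * s ^ n) *
      volume (closedBall (0 : EuclideanSpace ℝ (Fin n)) 1) := by
    rw [Measure.volume_eq_prod, Measure.prod_prod, Real.volume_Icc,
      Measure.addHaar_closedBall' _ _ (Real.sqrt_nonneg _), finrank_euclideanSpace_fin,
      show t - -t = 2 * t by ring, ← mul_assoc, ← ENNReal.ofReal_mul (by positivity)]
  have hratio : 1 ≤ √(n + 1) * (2 * t * s ^ n) := by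
    have hsq : (√(n + 1) * (2 * t * s ^ n)) ^ 2 = (n + 1) * (4 * a * (1 - a) ^ n) := by
      rw [mul_pow, mul_pow, mul_pow, ← pow_mul, mul_comm n 2, pow_mul,
        Real.sq_sqrt (by positivity), Real.sq_sqrt ha₀, Real.sq_sqrt (by linarith)]
      ring
    exact (one_le_sq_iff₀ (by positivity)).1 (hsq ▸ one_le_succ_mul_four_mul_one_sub_pow ha)
  calc volume (closedBall (0 : EuclideanSpace ℝ (Fin n)) 1)
      ≤ ENNReal.ofReal (√(n + 1) * (2 * t * s ^ n)) *
          volume (closedBall (0 : EuclideanSpace ℝ (Fin n)) 1) :=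
        le_mul_of_one_le_left' (ENNReal.one_le_ofReal.2 hratio)
    _ = ENNReal.ofReal √(n + 1) * volume X := by
        rw [hXvol, ENNReal.ofReal_mul (Real.sqrt_nonneg _), mul_assoc]
    _ ≤ ENNReal.ofReal √(n + 1) *
          volume (closedBall (0 : EuclideanSpace ℝ (Fin (n + 1))) 1) := by
        gcongr
        exact (measure_mono hX).trans_eq (finConsEuclidean.measurePreserving.measure_preimage
          measurableSet_closedBall.nullMeasurableSet)

theorem IsNarrow.volume_le_quarter_mul_volume_closedBall {n : ℕ}
    {v : EuclideanSpace ℝ (Fin (n + 1))} {S : Set (EuclideanSpace ℝ (Fin (n + 1)))}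
    (h : IsNarrow (1 / (4 * √(n + 1))) v S) (hv : ‖v‖ = 1) (hS : MeasurableSet S)
    (hSB : S ⊆ closedBall 0 1) :
    volume S ≤ 1 / 4 * volume (closedBall (0 : EuclideanSpace ℝ (Fin (n + 1))) 1) :=
  calc volume S ≤ ENNReal.ofReal (1 / (4 * √(n + 1))) *
        volume (closedBall (0 : EuclideanSpace ℝ (Fin n)) 1) :=
      h.volume_le_mul_volume_closedBall hv hS hSB
    _ ≤ ENNReal.ofReal (1 / (4 * √(n + 1))) *
        (ENNReal.ofReal √(n + 1) *
          volume (closedBall (0 : EuclideanSpace ℝ (Fin (n + 1))) 1)) := by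
      gcongr; exact volume_closedBall_le_sqrt_mul n
    _ = 1 / 4 * volume (closedBall (0 : EuclideanSpace ℝ (Fin (n + 1))) 1) := by
      rw [← mul_assoc, ← ENNReal.ofReal_mul (by positivity),
        show 1 / (4 * √(n + 1)) * √(n + 1) = (1 / 4 : ℝ) by field_simp]
      simp

theorem uniform_ball_noise_is_dispersive_general {d : ℕ}
    {Ω : Type*} [MeasurableSpace Ω] (P : Measure Ω) [IsProbabilityMeasure P]
    (σ : ℝ) (hσ : 0 < σ)
    (ξb : Ω → EuclideanSpace ℝ (Fin d)) (hξbmeas : Measurable ξb)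
    (hξblaw : Measure.map ξb P =
      (volume (Metric.closedBall (0 : EuclideanSpace ℝ (Fin d)) 1))⁻¹ •
        volume.restrict (Metric.closedBall (0 : EuclideanSpace ℝ (Fin d)) 1))
    (v : EuclideanSpace ℝ (Fin d)) (hv : ‖v‖ = 1)
    (A : Set (EuclideanSpace ℝ (Fin d))) (hA : MeasurableSet A)
    (hnarrow : ∀ u ∈ A, ∀ q : ℝ, σ / (4 * Real.sqrt d) ≤ q → u + q • v ∉ A) :
    P {ω | σ • ξb ω ∈ A} ≤ 1 / 4 := by
  obtain ⟨n, rfl⟩ : ∃ n, d = n + 1 :=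
    Nat.exists_eq_succ_of_ne_zero fun hd => by subst hd; simp [Subsingleton.elim v 0] at hv
  set B := closedBall (0 : EuclideanSpace ℝ (Fin (n + 1))) 1
  set S := (σ • LinearMap.id : EuclideanSpace ℝ (Fin (n + 1)) →ₗ[ℝ] _) ⁻¹' A
  have hS : MeasurableSet S := hA.preimage (measurable_const_smul σ)
  have hnarrowS : IsNarrow (1 / (4 * √(n + 1))) v (S ∩ B) :=
    (IsNarrow.preimage hnarrow _ hσ.le (by simp) (le_of_eq (by push_cast; ring))).mono
      inter_subset_left
  have hvol : volume (S ∩ B) ≤ 1 / 4 * volume B :=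
    hnarrowS.volume_le_quarter_mul_volume_closedBall hv (hS.inter measurableSet_closedBall)
      inter_subset_right
  have hB₀ : volume B ≠ 0 := (measure_closedBall_pos volume 0 one_pos).ne'
  have hB : volume B ≠ ∞ := measure_closedBall_lt_top.ne
  calc P {ω | σ • ξb ω ∈ A} = (volume B)⁻¹ * volume (S ∩ B) := by
        rw [show {ω | σ • ξb ω ∈ A} = ξb ⁻¹' S from rfl, ← Measure.map_apply hξbmeas hS,
          hξblaw, Measure.smul_apply, Measure.restrict_apply hS, smul_eq_mul]
    _ ≤ (volume B)⁻¹ * (1 / 4 * volume B) := by gcongr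
    _ = 1 / 4 := by rw [mul_left_comm, ENNReal.inv_mul_cancel hB₀ hB, mul_one]

/-- A vector `ξ_b` uniform on the unit ball of `ℝ^d`, rescaled as
`ξ = σ·ξ_b`, has the `v`-dispersive property for every unit vector `v`: for every
Borel set `A` with the `(σ/(4√d), v)`-narrow property, `P(ξ ∈ A) ≤ 1/4`. -/
theorem uniform_ball_noise_is_dispersive {d : ℕ} (hd : 1 ≤ d)
    {Ω : Type*} [MeasurableSpace Ω] (P : Measure Ω) [IsProbabilityMeasure P]
    (σ : ℝ) (hσ : 0 < σ)
    (ξb : Ω → EuclideanSpace ℝ (Fin d)) (hξbmeas : Measurable ξb)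
    (hξblaw : Measure.map ξb P =
      (volume (Metric.closedBall (0 : EuclideanSpace ℝ (Fin d)) 1))⁻¹ •
        volume.restrict (Metric.closedBall (0 : EuclideanSpace ℝ (Fin d)) 1))
    (v : EuclideanSpace ℝ (Fin d)) (hv : ‖v‖ = 1)
    (A : Set (EuclideanSpace ℝ (Fin d))) (hA : MeasurableSet A)
    (hnarrow : ∀ u ∈ A, ∀ q : ℝ, σ / (4 * Real.sqrt d) ≤ q → u + q • v ∉ A) :
    P {ω | σ • ξb ω ∈ A} ≤ 1 / 4 :=
  uniform_ball_noise_is_dispersive_general P σ hσ ξb hξbmeas hξblaw v hv A hA hnarrow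
end

section
/- Let A be a real symmetric positive semidefinite d×d matrix and let a > 0 satisfy a·‖A‖₂ ≤ 1, where ‖·‖₂ is the spectral (operator) norm. Then for all natural numbers i and j: ‖(I − aA)^i · A · (I − aA)^j‖₂ ≤ 1/(a·(i + j + 1)). -/
lemma aux_t_pow (t : ℝ) (h0 : 0 ≤ t) (h1 : t ≤ 1) (n : ℕ) :
    (n + 1 : ℝ) * (t * (1 - t) ^ n) ≤ 1 := by
  set s := 1 - t with hs
  have hs0 : 0 ≤ s := by linarith
  have hs1 : s ≤ 1 := by linarith
  have geom : t * ∑ k ∈ Finset.range (n + 1), s ^ k = 1 - s ^ (n + 1) := by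
    have h := geom_sum_mul s (n + 1)
    have ht : t = -(s - 1) := by rw [hs]; ring
    calc t * ∑ k ∈ Finset.range (n + 1), s ^ k
        = -((∑ k ∈ Finset.range (n + 1), s ^ k) * (s - 1)) := by rw [ht]; ring
      _ = 1 - s ^ (n + 1) := by rw [h]; ring
  have hsum : (n + 1 : ℝ) * s ^ n ≤ ∑ k ∈ Finset.range (n + 1), s ^ k := by
    have : ∀ k ∈ Finset.range (n + 1), s ^ n ≤ s ^ k := fun k hk =>
      pow_le_pow_of_le_one hs0 hs1 (Nat.lt_succ_iff.mp (Finset.mem_range.mp hk))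
    calc (n + 1 : ℝ) * s ^ n = ∑ _k ∈ Finset.range (n + 1), s ^ n := by
          rw [Finset.sum_const, Finset.card_range]; ring_nf
      _ ≤ _ := Finset.sum_le_sum this
  calc (n + 1 : ℝ) * (t * (1 - t) ^ n) = t * ((n + 1 : ℝ) * s ^ n) := by rw [← hs]; ring
    _ ≤ t * ∑ k ∈ Finset.range (n + 1), s ^ k := mul_le_mul_of_nonneg_left hsum h0
    _ = 1 - s ^ (n + 1) := geom
    _ ≤ 1 := by have := pow_nonneg hs0 (n + 1); linarith

lemma aux_conj_mul {d : ℕ} (U X Y : Matrix (Fin d) (Fin d) ℝ)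
    (hU : star U * U = 1) :
    (U * X * star U) * (U * Y * star U) = U * (X * Y) * star U := by
  calc (U * X * star U) * (U * Y * star U)
      = U * X * (star U * U) * Y * star U := by simp only [mul_assoc]
    _ = U * (X * Y) * star U := by rw [hU]; simp only [mul_one, mul_assoc]

lemma aux_conj_pow {d : ℕ} (U X : Matrix (Fin d) (Fin d) ℝ)
    (hU : star U * U = 1) (hU' : U * star U = 1) (m : ℕ) :
    (U * X * star U) ^ m = U * X ^ m * star U := by
  induction m with
  | zero => simp [hU']
  | succ k ih => rw [pow_succ, pow_succ, ih, aux_conj_mul U _ _ hU]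

open scoped Matrix.Norms.L2Operator in
lemma aux_diag_norm {d : ℕ} (w : Fin d → ℝ) (c : ℝ) (hc : 0 ≤ c) (hw : ∀ k, |w k| ≤ c) :
    ‖Matrix.toEuclideanCLM (𝕜 := ℝ) (n := Fin d) (Matrix.diagonal w)‖ ≤ c := by
  refine ContinuousLinearMap.opNorm_le_bound _ hc fun x => ?_
  have hx : ∀ k, (Matrix.toEuclideanCLM (𝕜 := ℝ) (n := Fin d) (Matrix.diagonal w) x) k
      = w k * x k := by
    intro k
    have : (Matrix.toEuclideanCLM (𝕜 := ℝ) (n := Fin d) (Matrix.diagonal w) x) k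
        = (Matrix.diagonal w).mulVec (WithLp.equiv _ _ x) k := rfl
    rw [this, Matrix.mulVec_diagonal]
    rfl
  rw [EuclideanSpace.norm_eq, EuclideanSpace.norm_eq]
  rw [← Real.sqrt_sq hc, ← Real.sqrt_mul (sq_nonneg c)]
  refine Real.sqrt_le_sqrt ?_
  rw [Finset.mul_sum]
  refine Finset.sum_le_sum fun k _ => ?_
  rw [hx k]
  have h1 : ‖w k * x k‖ ≤ c * ‖x k‖ := by
    rw [norm_mul]
    exact mul_le_mul_of_nonneg_right ((Real.norm_eq_abs _) ▸ hw k) (norm_nonneg _)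
  calc ‖w k * x k‖ ^ 2 ≤ (c * ‖x k‖) ^ 2 := pow_le_pow_left₀ (norm_nonneg _) h1 2
    _ = c ^ 2 * ‖x k‖ ^ 2 := by ring

open scoped Matrix.Norms.L2Operator in
private lemma spectral_norm_contraction_bound_aux {d : ℕ} (hd : 1 ≤ d)
    (A : Matrix (Fin d) (Fin d) ℝ) (hA : A.PosSemidef)
    (a : ℝ) (ha : 0 < a)
    (haA : a * ‖Matrix.toEuclideanCLM (𝕜 := ℝ) (n := Fin d) A‖ ≤ 1) (i j : ℕ) :
    ‖Matrix.toEuclideanCLM (𝕜 := ℝ) (n := Fin d) ((1 - a • A) ^ i * A * (1 - a • A) ^ j)‖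
      ≤ 1 / (a * (i + j + 1 : ℝ)) := by
  classical
  have hH := hA.1
  set U : Matrix (Fin d) (Fin d) ℝ := (hH.eigenvectorUnitary : Matrix (Fin d) (Fin d) ℝ) with hUdef
  set lam : Fin d → ℝ := hH.eigenvalues with hlam
  have hU : star U * U = 1 := Matrix.mem_unitaryGroup_iff'.mp hH.eigenvectorUnitary.2
  have hU' : U * star U = 1 := Matrix.mem_unitaryGroup_iff.mp hH.eigenvectorUnitary.2
  have hA_eq : A = U * Matrix.diagonal lam * star U := by
    have := hH.spectral_theorem
    simpa using this
  set v : Fin d → ℝ := fun k => 1 - a * lam k with hv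
  have hsub : (1 : Matrix (Fin d) (Fin d) ℝ) - a • A = U * Matrix.diagonal v * star U := by
    have hdv : Matrix.diagonal v = 1 - a • Matrix.diagonal lam := by
      rw [← Matrix.diagonal_one, ← Matrix.diagonal_smul, ← Matrix.diagonal_sub]
      rfl
    rw [hdv, mul_sub, sub_mul, mul_one, hU', Matrix.mul_smul, Matrix.smul_mul, hA_eq]
  set w : Fin d → ℝ := fun k => v k ^ i * lam k * v k ^ j with hw
  have hM : (1 - a • A) ^ i * A * (1 - a • A) ^ j = U * Matrix.diagonal w * star U := by
    rw [hsub, aux_conj_pow U _ hU hU' i, aux_conj_pow U _ hU hU' j]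
    nth_rewrite 1 [hA_eq]
    rw [aux_conj_mul U _ _ hU, aux_conj_mul U _ _ hU, Matrix.diagonal_pow,
      Matrix.diagonal_pow, Matrix.diagonal_mul_diagonal, Matrix.diagonal_mul_diagonal]
    rfl
  have hc : (0:ℝ) ≤ 1 / (a * (i + j + 1 : ℝ)) := by positivity
  -- eigenvalue bounds
  have hlam_le : ∀ k, lam k ≤ ‖Matrix.toEuclideanCLM (𝕜 := ℝ) (n := Fin d) A‖ := by
    intro k
    set y : EuclideanSpace ℝ (Fin d) := hH.eigenvectorBasis k with hy
    have hy1 : ‖y‖ = 1 := hH.eigenvectorBasis.orthonormal.1 k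
    have hvec : Matrix.toEuclideanCLM (𝕜 := ℝ) (n := Fin d) A y = lam k • y := by
      have h1 : Matrix.toEuclideanCLM (𝕜 := ℝ) (n := Fin d) A y
          = (WithLp.equiv 2 (Fin d → ℝ)).symm (A.mulVec (WithLp.equiv 2 (Fin d → ℝ) y)) := rfl
      rw [h1]
      have h2 : A.mulVec (WithLp.equiv 2 (Fin d → ℝ) y) = lam k • (WithLp.equiv 2 (Fin d → ℝ) y) :=
        hH.mulVec_eigenvectorBasis k
      rw [h2]
      rfl
    have := (Matrix.toEuclideanCLM (𝕜 := ℝ) (n := Fin d) A).le_opNorm y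
    rw [hvec, norm_smul, hy1, mul_one, mul_one] at this
    exact (le_abs_self _).trans ((Real.norm_eq_abs _) ▸ this)
  have hw_bound : ∀ k, |w k| ≤ 1 / (a * (i + j + 1 : ℝ)) := by
    intro k
    have h0 : 0 ≤ lam k := hA.eigenvalues_nonneg k
    have ht1 : a * lam k ≤ 1 :=
      le_trans (mul_le_mul_of_nonneg_left (hlam_le k) ha.le) haA
    have ht0 : 0 ≤ a * lam k := mul_nonneg ha.le h0
    have hv0 : 0 ≤ v k := by simp only [hv]; linarith
    have hwk : w k = lam k * (1 - a * lam k) ^ (i + j) := by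
      simp only [hw, hv, pow_add]; ring
    have hwnn : 0 ≤ w k := by
      rw [hwk]; exact mul_nonneg h0 (pow_nonneg (by linarith) _)
    rw [abs_of_nonneg hwnn, hwk]
    have key := aux_t_pow (a * lam k) ht0 ht1 (i + j)
    rw [le_div_iff₀ (by positivity)]
    have hcast : ((i + j : ℕ) + 1 : ℝ) = (i + j + 1 : ℝ) := by push_cast; ring
    rw [hcast] at key
    nlinarith [pow_nonneg (sub_nonneg.mpr ht1) (i + j), h0]
  -- norms of unitaries
  have hone : ‖(1 : Matrix (Fin d) (Fin d) ℝ)‖ ≤ 1 := by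
    rw [Matrix.cstar_norm_def, map_one]
    exact ContinuousLinearMap.norm_id_le
  have hUn : ‖U‖ ≤ 1 := by
    have h2 : ‖U‖ * ‖U‖ = ‖(1 : Matrix (Fin d) (Fin d) ℝ)‖ := by
      rw [← CStarRing.norm_star_mul_self, hU]
    nlinarith [norm_nonneg U]
  have hUsn : ‖star U‖ ≤ 1 := by
    have h2 : ‖star U‖ * ‖star U‖ = ‖(1 : Matrix (Fin d) (Fin d) ℝ)‖ := by
      rw [← CStarRing.norm_star_mul_self, star_star, hU']
    nlinarith [norm_nonneg (star U)]
  have hdiag : ‖Matrix.diagonal w‖ ≤ 1 / (a * (i + j + 1 : ℝ)) := by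
    rw [Matrix.cstar_norm_def]
    exact aux_diag_norm w _ hc hw_bound
  calc ‖Matrix.toEuclideanCLM (𝕜 := ℝ) (n := Fin d) ((1 - a • A) ^ i * A * (1 - a • A) ^ j)‖
      = ‖(1 - a • A) ^ i * A * (1 - a • A) ^ j‖ := (Matrix.cstar_norm_def _).symm
    _ = ‖U * Matrix.diagonal w * star U‖ := by rw [hM]
    _ ≤ ‖U * Matrix.diagonal w‖ * ‖star U‖ := norm_mul_le _ _
    _ ≤ ‖U‖ * ‖Matrix.diagonal w‖ * ‖star U‖ :=
        mul_le_mul_of_nonneg_right (norm_mul_le _ _) (norm_nonneg _)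
    _ ≤ 1 * (1 / (a * (i + j + 1 : ℝ))) * 1 := by
        gcongr
    _ = 1 / (a * (i + j + 1 : ℝ)) := by ring

/-- For a real symmetric positive semidefinite `d×d` matrix `A` and `a > 0`
with `a‖A‖₂ ≤ 1`, for all naturals `i, j`:
`‖(I - aA)^i A (I - aA)^j‖₂ ≤ 1/(a(i+j+1))`, where `‖·‖₂` is the spectral norm
(the operator norm of the associated map on Euclidean space). -/
theorem spectral_norm_contraction_bound {d : ℕ} (hd : 1 ≤ d)
    (A : Matrix (Fin d) (Fin d) ℝ) (hA : A.PosSemidef)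
    (a : ℝ) (ha : 0 < a)
    (haA : a * ‖Matrix.toEuclideanCLM (𝕜 := ℝ) (n := Fin d) A‖ ≤ 1) (i j : ℕ) :
    ‖Matrix.toEuclideanCLM (𝕜 := ℝ) (n := Fin d) ((1 - a • A) ^ i * A * (1 - a • A) ^ j)‖
      ≤ 1 / (a * (i + j + 1 : ℝ)) :=
  spectral_norm_contraction_bound_aux hd A hA a ha haA i j
end

section
/- Let H be a symmetric d×d matrix with ‖H‖ ≤ L whose smallest eigenvalue is −δ_m < 0, and let e₁ be a corresponding unit eigenvector (H e₁ = −δ_m e₁). Let η > 0, ρ > 0, B > 0, and a natural number K₀ satisfy ηL ≤ 1, η ≤ ρB/(8L²), and 16·ρ·B·η·K₀ ≤ 1. Let ψ⁰ = e₁ and for k ≥ 1 let ψ^k = ((I − ηH)/(1 + ηδ_m))·ψ^{k−1} + η·D̂^{k−1}·ψ^{k−1} + η·ζ^k, where ‖D̂^{k−1}‖ ≤ ρB and ‖ζ^k‖ ≤ 2L‖ψ^{k−1}‖. Write ψ̂^{k−1} = ((I − ηH)/(1 + ηδ_m))·ψ^{k−1}, and assume that for every l with 1 ≤ l ≤ K₀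 the partial sums satisfy |η·Σ_{k=1}^{l} ⟨ψ̂^{k−1}, ζ^k⟩| ≤ 1 and |η·Σ_{k=1}^{l} ⟨e₁, ζ^k⟩| ≤ 1/4. Then for every k with 0 ≤ k ≤ K₀: ‖ψ^k‖² ≤ 4 and ⟨e₁, ψ^k⟩ ≥ 1/2. -/
open scoped RealInnerProductSpace

private lemma cs_form {E : Type*} [NormedAddCommGroup E] [InnerProductSpace ℝ E]
    (T : E →L[ℝ] E) (hsym : ∀ x y : E, ⟪T x, y⟫ = ⟪x, T y⟫)
    (hpos : ∀ x : E, 0 ≤ ⟪x, T x⟫) (x y : E) :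
    ⟪x, T y⟫ ^ 2 ≤ ⟪x, T x⟫ * ⟪y, T y⟫ := by
  have hyx : ⟪y, T x⟫ = ⟪x, T y⟫ := by rw [← hsym x y, real_inner_comm]
  have hq : ∀ t : ℝ, 0 ≤ ⟪y, T y⟫ * (t * t) + 2 * ⟪x, T y⟫ * t + ⟪x, T x⟫ := by
    intro t
    have h0 := hpos (x + t • y)
    have hexp : ⟪x + t • y, T (x + t • y)⟫
        = ⟪y, T y⟫ * (t * t) + 2 * ⟪x, T y⟫ * t + ⟪x, T x⟫ := by
      simp only [map_add, map_smul, inner_add_left, inner_add_right,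
        real_inner_smul_left, real_inner_smul_right, hyx]
      ring
    rw [hexp] at h0
    exact h0
  have hd := discrim_le_zero hq
  rw [discrim] at hd
  nlinarith [hd]

private lemma norm_le_of_sym_pos {E : Type*} [NormedAddCommGroup E] [InnerProductSpace ℝ E]
    (T : E →L[ℝ] E) (hsym : ∀ x y : E, ⟪T x, y⟫ = ⟪x, T y⟫)
    (hpos : ∀ x : E, 0 ≤ ⟪x, T x⟫) (β : ℝ) (hβ : 0 ≤ β)
    (hub : ∀ x : E, ⟪x, T x⟫ ≤ β * ‖x‖ ^ 2) (v : E) : ‖T v‖ ≤ β * ‖v‖ := by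
  have hcs := cs_form T hsym hpos v (T v)
  have h1 : ⟪v, T (T v)⟫ = ‖T v‖ ^ 2 := by
    rw [← hsym, real_inner_self_eq_norm_sq]
  rw [h1] at hcs
  have h2 : ⟪v, T v⟫ ≤ β * ‖v‖ ^ 2 := hub v
  have h3 : ⟪T v, T (T v)⟫ ≤ β * ‖T v‖ ^ 2 := hub (T v)
  rcases eq_or_lt_of_le (norm_nonneg (T v)) with h0 | h0
  · rw [← h0]; positivity
  · have hp1 : (0:ℝ) ≤ ⟪v, T v⟫ := hpos v
    have hp2 : (0:ℝ) ≤ ⟪T v, T (T v)⟫ := hpos (T v)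
    have h4 : (‖T v‖ ^ 2) ^ 2 ≤ (β * ‖v‖ ^ 2) * (β * ‖T v‖ ^ 2) := by
      calc (‖T v‖ ^ 2) ^ 2 ≤ ⟪v, T v⟫ * ⟪T v, T (T v)⟫ := hcs
      _ ≤ (β * ‖v‖ ^ 2) * (β * ‖T v‖ ^ 2) := by nlinarith
    have h5 : ‖T v‖ ^ 2 ≤ (β * ‖v‖) ^ 2 := by
      have hTv2 : (0:ℝ) < ‖T v‖ ^ 2 := by positivity
      have := mul_le_mul_of_nonneg_right (le_refl (1:ℝ)) hTv2.le
      nlinarith [h4, hTv2]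
    nlinarith [h5, norm_nonneg v, norm_nonneg (T v), mul_nonneg hβ (norm_nonneg v)]

set_option maxHeartbeats 1000000

/-- Rescaled difference iteration near a saddle. If `H` is symmetric with
`‖H‖ ≤ L` and smallest eigenvalue `-δm < 0` with unit eigenvector `e₁`, the iteration
`ψ^k = ((I - ηH)/(1+ηδm)) ψ^{k-1} + η D̂^{k-1} ψ^{k-1} + η ζ^k` started at `ψ⁰ = e₁`,
with `‖D̂^{k-1}‖ ≤ ρB`, `‖ζ^k‖ ≤ 2L‖ψ^{k-1}‖`, bounded partial sums of `⟨ψ̂^{k-1}, ζ^k⟩`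
and `⟨e₁, ζ^k⟩`, and the stated step-size conditions, satisfies `‖ψ^k‖² ≤ 4` and
`⟨e₁, ψ^k⟩ ≥ 1/2` for all `k ≤ K₀`. -/
theorem rescaled_difference_iteration_bounds {d : ℕ} (hd : 1 ≤ d)
    (H : EuclideanSpace ℝ (Fin d) →L[ℝ] EuclideanSpace ℝ (Fin d))
    (hHsym : IsSelfAdjoint H)
    (L δm η ρ B : ℝ) (K₀ : ℕ)
    (hL : 0 < L) (hδm : 0 < δm) (hHnorm : ‖H‖ ≤ L)
    (e₁ : EuclideanSpace ℝ (Fin d)) (he₁ : ‖e₁‖ = 1)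
    (heig : H e₁ = (-δm) • e₁)
    (hmin : ∀ v : EuclideanSpace ℝ (Fin d), -δm * ‖v‖ ^ 2 ≤ ⟪v, H v⟫)
    (hη : 0 < η) (hρ : 0 < ρ) (hB : 0 < B)
    (hηL : η * L ≤ 1) (hη2 : η ≤ ρ * B / (8 * L ^ 2))
    (hη3 : 16 * ρ * B * η * (K₀ : ℝ) ≤ 1)
    (Dhat : ℕ → EuclideanSpace ℝ (Fin d) →L[ℝ] EuclideanSpace ℝ (Fin d))
    (ζ : ℕ → EuclideanSpace ℝ (Fin d)) (ψ : ℕ → EuclideanSpace ℝ (Fin d))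
    (hψ0 : ψ 0 = e₁)
    (hrec : ∀ k : ℕ,
      ψ (k + 1) = (1 + η * δm)⁻¹ • ((1 - η • H) (ψ k)) + η • Dhat k (ψ k) + η • ζ (k + 1))
    (hD : ∀ k, ‖Dhat k‖ ≤ ρ * B)
    (hζ : ∀ k, ‖ζ (k + 1)‖ ≤ 2 * L * ‖ψ k‖)
    (hsum1 : ∀ l, 1 ≤ l → l ≤ K₀ →
      |η * ∑ k ∈ Finset.Icc 1 l, ⟪(1 + η * δm)⁻¹ • ((1 - η • H) (ψ (k - 1))), ζ k⟫| ≤ 1)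
    (hsum2 : ∀ l, 1 ≤ l → l ≤ K₀ →
      |η * ∑ k ∈ Finset.Icc 1 l, ⟪e₁, ζ k⟫| ≤ 1 / 4) :
    ∀ k ≤ K₀, ‖ψ k‖ ^ 2 ≤ 4 ∧ 1 / 2 ≤ ⟪e₁, ψ k⟫ := by
  have hβpos : (0:ℝ) < 1 + η * δm := by positivity
  -- symmetry of T = 1 - η • H
  have hTsym : ∀ x y : EuclideanSpace ℝ (Fin d),
      ⟪(1 - η • H) x, y⟫ = ⟪x, (1 - η • H) y⟫ := by
    intro x y
    have hH : ⟪H x, y⟫ = ⟪x, H y⟫ := hHsym.isSymmetric x y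
    have hax : (1 - η • H) x = x - η • H x := rfl
    have hay : (1 - η • H) y = y - η • H y := rfl
    rw [hax, hay, inner_sub_left, inner_sub_right, real_inner_smul_left,
      real_inner_smul_right, hH]
  have hTval : ∀ x : EuclideanSpace ℝ (Fin d),
      ⟪x, (1 - η • H) x⟫ = ‖x‖ ^ 2 - η * ⟪x, H x⟫ := by
    intro x
    have hax : (1 - η • H) x = x - η • H x := rfl
    rw [hax, inner_sub_right, real_inner_smul_right, real_inner_self_eq_norm_sq]
  have hTpos : ∀ x : EuclideanSpace ℝ (Fin d), 0 ≤ ⟪x, (1 - η • H) x⟫ := by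
    intro x
    rw [hTval]
    have h1 : ⟪x, H x⟫ ≤ L * ‖x‖ ^ 2 := by
      have ha := real_inner_le_norm x (H x)
      have hb := H.le_opNorm x
      nlinarith [norm_nonneg x, norm_nonneg (H x)]
    have h2 : η * ⟪x, H x⟫ ≤ η * (L * ‖x‖ ^ 2) := mul_le_mul_of_nonneg_left h1 hη.le
    have h3 : (η * L) * ‖x‖ ^ 2 ≤ 1 * ‖x‖ ^ 2 := mul_le_mul_of_nonneg_right hηL (sq_nonneg _)
    linarith
  have hTub : ∀ x : EuclideanSpace ℝ (Fin d),
      ⟪x, (1 - η • H) x⟫ ≤ (1 + η * δm) * ‖x‖ ^ 2 := by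
    intro x
    rw [hTval]
    have h1 := hmin x
    linarith [mul_le_mul_of_nonneg_left h1 hη.le]
  have hTn : ∀ v, ‖(1 - η • H) v‖ ≤ (1 + η * δm) * ‖v‖ :=
    norm_le_of_sym_pos _ hTsym hTpos _ hβpos.le hTub
  have hcontr : ∀ v : EuclideanSpace ℝ (Fin d),
      ‖(1 + η * δm)⁻¹ • ((1 - η • H) v)‖ ≤ ‖v‖ := by
    intro v
    rw [norm_smul, Real.norm_eq_abs, abs_of_pos (inv_pos.mpr hβpos)]
    calc (1 + η * δm)⁻¹ * ‖(1 - η • H) v‖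
        ≤ (1 + η * δm)⁻¹ * ((1 + η * δm) * ‖v‖) :=
          mul_le_mul_of_nonneg_left (hTn v) (inv_pos.mpr hβpos).le
      _ = ‖v‖ := by field_simp
  -- e₁ is fixed by the rescaled map
  have he₁T : (1 - η • H) e₁ = (1 + η * δm) • e₁ := by
    have hax : (1 - η • H) e₁ = e₁ - η • ((-δm) • e₁) := by
      have h0 : (1 - η • H) e₁ = e₁ - η • H e₁ := rfl
      rw [h0, heig]
    rw [hax]
    module
  have he₁hat : ∀ v : EuclideanSpace ℝ (Fin d),
      ⟪e₁, (1 + η * δm)⁻¹ • ((1 - η • H) v)⟫ = ⟪e₁, v⟫ := by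
    intro v
    rw [real_inner_smul_right, ← hTsym e₁ v, he₁T, real_inner_smul_left,
      ← mul_assoc, inv_mul_cancel₀ hβpos.ne', one_mul]
  have hψ0sq : ‖ψ 0‖ ^ 2 = 1 := by rw [hψ0, he₁]; norm_num
  have hψ0e : ⟪e₁, ψ 0⟫ = 1 := by
    rw [hψ0, real_inner_self_eq_norm_sq, he₁]; norm_num
  rcases Nat.eq_zero_or_pos K₀ with hK0 | hK1
  · intro k hk
    have : k = 0 := by omega
    subst this
    exact ⟨by rw [hψ0sq]; norm_num, by rw [hψ0e]; norm_num⟩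
  -- now K₀ ≥ 1
  have hρB0 : (0:ℝ) ≤ η * (ρ * B) := by positivity
  have hKρ : η * (ρ * B) * (K₀ : ℝ) ≤ 1 / 16 := by
    have h : η * (ρ * B) * (K₀ : ℝ) = (16 * ρ * B * η * (K₀ : ℝ)) / 16 := by ring
    rw [h]; linarith
  have hK1' : (1:ℝ) ≤ (K₀ : ℝ) := by exact_mod_cast hK1
  have hρB16 : η * (ρ * B) ≤ 1 / 16 := by
    have := mul_le_mul_of_nonneg_left hK1' hρB0
    linarith
  have hηL2 : η * L ^ 2 ≤ ρ * B / 8 := by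
    have h := (le_div_iff₀ (by positivity : (0:ℝ) < 8 * L ^ 2)).mp hη2
    have h2 : η * (8 * L ^ 2) = 8 * (η * L ^ 2) := by ring
    rw [h2] at h
    linarith
  -- one-step inequality for the squared norm
  have hstep : ∀ k : ℕ, ‖ψ k‖ ^ 2 ≤ 4 →
      ‖ψ (k + 1)‖ ^ 2 ≤ ‖ψ k‖ ^ 2 + 13 * (η * (ρ * B)) +
        2 * η * ⟪(1 + η * δm)⁻¹ • ((1 - η • H) (ψ k)), ζ (k + 1)⟫ := by
    intro k hk4
    obtain ⟨u, hu⟩ : ∃ u, u = (1 + η * δm)⁻¹ • ((1 - η • H) (ψ k)) := ⟨_, rfl⟩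
    obtain ⟨w, hw⟩ : ∃ w, w = Dhat k (ψ k) + ζ (k + 1) := ⟨_, rfl⟩
    rw [← hu]
    have hrw : ψ (k + 1) = u + η • w := by rw [hrec k, hu, hw, smul_add, add_assoc]
    have hnw : ‖η • w‖ ^ 2 = η ^ 2 * ‖w‖ ^ 2 := by
      rw [norm_smul, Real.norm_eq_abs, mul_pow, sq_abs]
    have hsq : ‖ψ (k + 1)‖ ^ 2 = ‖u‖ ^ 2 + 2 * (η * ⟪u, w⟫) + η ^ 2 * ‖w‖ ^ 2 := by
      rw [hrw, norm_add_sq_real, real_inner_smul_right, hnw]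
    have hun : ‖u‖ ≤ ‖ψ k‖ := by rw [hu]; exact hcontr (ψ k)
    have hψpos : (0:ℝ) ≤ ‖ψ k‖ := norm_nonneg _
    have hDn : ‖Dhat k (ψ k)‖ ≤ ρ * B * ‖ψ k‖ :=
      le_trans ((Dhat k).le_opNorm (ψ k)) (mul_le_mul_of_nonneg_right (hD k) hψpos)
    have hwn : ‖w‖ ≤ (ρ * B + 2 * L) * ‖ψ k‖ := by
      rw [hw]
      calc ‖Dhat k (ψ k) + ζ (k + 1)‖ ≤ ‖Dhat k (ψ k)‖ + ‖ζ (k + 1)‖ := norm_add_le _ _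
        _ ≤ ρ * B * ‖ψ k‖ + 2 * L * ‖ψ k‖ := add_le_add hDn (hζ k)
        _ = (ρ * B + 2 * L) * ‖ψ k‖ := by ring
    have hiwD : ⟪u, Dhat k (ψ k)⟫ ≤ (ρ * B) * ‖ψ k‖ ^ 2 := by
      have h1 := real_inner_le_norm u (Dhat k (ψ k))
      have h2 : ‖u‖ * ‖Dhat k (ψ k)‖ ≤ ‖ψ k‖ * (ρ * B * ‖ψ k‖) :=
        mul_le_mul hun hDn (norm_nonneg _) hψpos
      calc ⟪u, Dhat k (ψ k)⟫ ≤ ‖ψ k‖ * (ρ * B * ‖ψ k‖) := le_trans h1 h2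
        _ = (ρ * B) * ‖ψ k‖ ^ 2 := by ring
    have hiw : ⟪u, w⟫ = ⟪u, Dhat k (ψ k)⟫ + ⟪u, ζ (k + 1)⟫ := by
      rw [hw, inner_add_right]
    have hwsq : ‖w‖ ^ 2 ≤ (2 * (ρ * B) ^ 2 + 8 * L ^ 2) * ‖ψ k‖ ^ 2 := by
      have h1 : ‖w‖ ^ 2 ≤ ((ρ * B + 2 * L) * ‖ψ k‖) ^ 2 := by
        nlinarith [norm_nonneg w, hwn,
          mul_nonneg (by positivity : (0:ℝ) ≤ ρ * B + 2 * L) hψpos]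
      linarith [sq_nonneg ((ρ * B - 2 * L) * ‖ψ k‖), h1]
    have e1 : η ^ 2 * (2 * (ρ * B) ^ 2) ≤ (1 / 8) * (η * (ρ * B)) := by
      have := mul_le_mul_of_nonneg_left hρB16 hρB0
      linarith
    have e2 : η ^ 2 * (8 * L ^ 2) ≤ η * (ρ * B) := by
      have := mul_le_mul_of_nonneg_left hηL2 (by positivity : (0:ℝ) ≤ 8 * η)
      linarith
    have hw2 : η ^ 2 * ‖w‖ ^ 2 ≤ (9 / 8) * (η * (ρ * B)) * ‖ψ k‖ ^ 2 := by
      have h3 := mul_le_mul_of_nonneg_left hwsq (sq_nonneg η)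
      have h4 := mul_le_mul_of_nonneg_right e1 (sq_nonneg ‖ψ k‖)
      have h5 := mul_le_mul_of_nonneg_right e2 (sq_nonneg ‖ψ k‖)
      linarith
    have hw3 : η ^ 2 * ‖w‖ ^ 2 ≤ 5 * (η * (ρ * B)) := by
      have h6 := mul_le_mul_of_nonneg_left hk4
        (by positivity : (0:ℝ) ≤ (9 / 8) * (η * (ρ * B)))
      linarith
    have hu2 : ‖u‖ ^ 2 ≤ ‖ψ k‖ ^ 2 := pow_le_pow_left₀ (norm_nonneg u) hun 2
    have h7 : 2 * η * ⟪u, Dhat k (ψ k)⟫ ≤ 2 * η * ((ρ * B) * ‖ψ k‖ ^ 2) :=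
      mul_le_mul_of_nonneg_left hiwD (by positivity)
    have h8 : 2 * (η * (ρ * B)) * ‖ψ k‖ ^ 2 ≤ 2 * (η * (ρ * B)) * 4 :=
      mul_le_mul_of_nonneg_left hk4 (by positivity)
    rw [hsq, hiw]
    linarith
  -- bound on the drift term along the horizon
  have hcoef : ∀ l : ℕ, l ≤ K₀ → 13 * (η * (ρ * B)) * (l : ℝ) ≤ 13 / 16 := by
    intro l hl
    have hcast : (l : ℝ) ≤ (K₀ : ℝ) := by exact_mod_cast hl
    have := mul_le_mul_of_nonneg_left hcast hρB0
    linarith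
  -- main norm induction
  have key : ∀ l : ℕ, l ≤ K₀ → ‖ψ l‖ ^ 2 ≤ 1 + 13 * (η * (ρ * B)) * (l : ℝ) +
      2 * η * ∑ k ∈ Finset.Icc 1 l, ⟪(1 + η * δm)⁻¹ • ((1 - η • H) (ψ (k - 1))), ζ k⟫ := by
    intro l
    induction l with
    | zero =>
      intro _
      rw [Finset.Icc_eq_empty (by omega), Finset.sum_empty]
      rw [hψ0sq]; norm_num
    | succ n ih =>
      intro hn
      have hn' : n ≤ K₀ := by omega
      have hbn := ih hn'
      have hSn : 2 * η * ∑ k ∈ Finset.Icc 1 n,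
          ⟪(1 + η * δm)⁻¹ • ((1 - η • H) (ψ (k - 1))), ζ k⟫ ≤ 2 := by
        rcases Nat.eq_zero_or_pos n with h0 | h1
        · subst h0
          rw [Finset.Icc_eq_empty (by omega), Finset.sum_empty]
          norm_num
        · have habs := abs_le.mp (hsum1 n h1 hn')
          linarith [habs.2]
      have hψn4 : ‖ψ n‖ ^ 2 ≤ 4 := by
        have := hcoef n hn'
        linarith
      have hst := hstep n hψn4
      rw [Finset.sum_Icc_succ_top (by omega : 1 ≤ n + 1)]
      have hidx : (n + 1) - 1 = n := by omega
      rw [hidx, Nat.cast_add, Nat.cast_one]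
      linarith
  have hnorm4 : ∀ l : ℕ, l ≤ K₀ → ‖ψ l‖ ^ 2 ≤ 4 := by
    intro l hl
    have hb := key l hl
    have hc := hcoef l hl
    have hS : 2 * η * ∑ k ∈ Finset.Icc 1 l,
        ⟪(1 + η * δm)⁻¹ • ((1 - η • H) (ψ (k - 1))), ζ k⟫ ≤ 2 := by
      rcases Nat.eq_zero_or_pos l with h0 | h1
      · subst h0
        rw [Finset.Icc_eq_empty (by omega), Finset.sum_empty]
        norm_num
      · have habs := abs_le.mp (hsum1 l h1 hl)
        linarith [habs.2]
    linarith
  have hnorm2 : ∀ l : ℕ, l ≤ K₀ → ‖ψ l‖ ≤ 2 := by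
    intro l hl
    nlinarith [hnorm4 l hl, norm_nonneg (ψ l)]
  -- inner product identity
  have hinner : ∀ l : ℕ, ⟪e₁, ψ l⟫ = 1 +
      η * ∑ k ∈ Finset.Icc 1 l, (⟪e₁, Dhat (k - 1) (ψ (k - 1))⟫ + ⟪e₁, ζ k⟫) := by
    intro l
    induction l with
    | zero =>
      rw [Finset.Icc_eq_empty (by omega), Finset.sum_empty, hψ0e]
      norm_num
    | succ n ih =>
      rw [hrec n, inner_add_right, inner_add_right, he₁hat, ih,
        real_inner_smul_right, real_inner_smul_right,
        Finset.sum_Icc_succ_top (by omega : 1 ≤ n + 1)]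
      have hidx : (n + 1) - 1 = n := by omega
      rw [hidx]
      ring
  -- conclusion
  intro k hk
  refine ⟨hnorm4 k hk, ?_⟩
  rcases Nat.eq_zero_or_pos k with h0 | h1
  · subst h0; rw [hψ0e]; norm_num
  have hD2 : |∑ j ∈ Finset.Icc 1 k, ⟪e₁, Dhat (j - 1) (ψ (j - 1))⟫|
      ≤ (k : ℝ) * (2 * (ρ * B)) := by
    calc |∑ j ∈ Finset.Icc 1 k, ⟪e₁, Dhat (j - 1) (ψ (j - 1))⟫|
        ≤ ∑ j ∈ Finset.Icc 1 k, |⟪e₁, Dhat (j - 1) (ψ (j - 1))⟫| :=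
          Finset.abs_sum_le_sum_abs _ _
      _ ≤ ∑ j ∈ Finset.Icc 1 k, 2 * (ρ * B) := by
          apply Finset.sum_le_sum
          intro j hj
          have hj' : j - 1 ≤ K₀ := by
            have := (Finset.mem_Icc.mp hj).2
            omega
          have h1 : |⟪e₁, Dhat (j - 1) (ψ (j - 1))⟫| ≤ ‖e₁‖ * ‖Dhat (j - 1) (ψ (j - 1))‖ :=
            abs_real_inner_le_norm _ _
          have h2 : ‖Dhat (j - 1) (ψ (j - 1))‖ ≤ ρ * B * ‖ψ (j - 1)‖ :=
            le_trans ((Dhat (j - 1)).le_opNorm _)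
              (mul_le_mul_of_nonneg_right (hD (j - 1)) (norm_nonneg _))
          have h3 : ‖ψ (j - 1)‖ ≤ 2 := hnorm2 (j - 1) hj'
          have h4 : (0:ℝ) ≤ ρ * B := by positivity
          have h5 : ρ * B * ‖ψ (j - 1)‖ ≤ ρ * B * 2 := mul_le_mul_of_nonneg_left h3 h4
          rw [he₁] at h1
          linarith
      _ = ((k + 1 - 1 : ℕ) : ℝ) * (2 * (ρ * B)) := by
          rw [Finset.sum_const, Nat.card_Icc, nsmul_eq_mul]
      _ = (k : ℝ) * (2 * (ρ * B)) := by norm_num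
  have hζ2 := hsum2 k h1 hk
  have hkcast : (k : ℝ) ≤ (K₀ : ℝ) := by exact_mod_cast hk
  have hDbound : |η * ∑ j ∈ Finset.Icc 1 k, ⟪e₁, Dhat (j - 1) (ψ (j - 1))⟫| ≤ 1 / 8 := by
    rw [abs_mul, abs_of_pos hη]
    calc η * |∑ j ∈ Finset.Icc 1 k, ⟪e₁, Dhat (j - 1) (ψ (j - 1))⟫|
        ≤ η * ((k : ℝ) * (2 * (ρ * B))) :=
          mul_le_mul_of_nonneg_left hD2 hη.le
      _ ≤ 1 / 8 := by
          have := mul_le_mul_of_nonneg_left hkcast hρB0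
          linarith
  rw [hinner k, Finset.sum_add_distrib, mul_add]
  have ha := abs_le.mp hDbound
  have hb := abs_le.mp hζ2
  linarith [ha.1, hb.1]
end

section
/- Let H be a symmetric negative semidefinite linear map on ℝ^d, b ∈ ℝ^d, and g(v) = ⟨b, v⟩ + ½⟨v, Hv⟩, so ∇g(v) = b + Hv. Let η > 0, ρ > 0, B > 0, K a natural number, and let v⁰, v¹, …, v^K and γ⁰, …, γ^{K−1}, ξ¹, …, ξ^K be vectors in ℝ^d satisfying v^{k+1} = v^k − η(γ^k + ξ^{k+1}) and ‖γ^k − ∇g(v^k)‖ ≤ ρB²/2 for every k < K. Then: g(v^K) ≤ g(v⁰) − η·Σ_{k=1}^{K}⟨∇g(v^{k−1}), ξ^k⟩ − (7η/8)·Σ_{k=0}^{K−1}‖∇g(v^k)‖² + ρ²B⁴ηK/2. -/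
open scoped RealInnerProductSpace

lemma cpd_step {d : ℕ}
    (H : EuclideanSpace ℝ (Fin d) →L[ℝ] EuclideanSpace ℝ (Fin d))
    (hHsym : IsSelfAdjoint H)
    (hHneg : ∀ v : EuclideanSpace ℝ (Fin d), ⟪v, H v⟫ ≤ 0)
    (b : EuclideanSpace ℝ (Fin d)) (η ρ B : ℝ) (hη : 0 < η)
    (x g e : EuclideanSpace ℝ (Fin d))
    (he : ‖g - (b + H x)‖ ≤ ρ * B ^ 2 / 2) :
    ⟪b, x - η • (g + e)⟫ + 1 / 2 * ⟪x - η • (g + e), H (x - η • (g + e))⟫ ≤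
      ⟪b, x⟫ + 1 / 2 * ⟪x, H x⟫ - η * ⟪b + H x, e⟫
        - 7 * η / 8 * ‖b + H x‖ ^ 2 + ρ ^ 2 * B ^ 4 * η / 2 := by
  have hsym : ∀ p q : EuclideanSpace ℝ (Fin d), ⟪H p, q⟫ = ⟪p, H q⟫ := by
    intro p q
    conv_lhs => rw [← hHsym.adjoint_eq]
    exact ContinuousLinearMap.adjoint_inner_left H q p
  set w : EuclideanSpace ℝ (Fin d) := η • (g + e) with hw
  set G : EuclideanSpace ℝ (Fin d) := b + H x with hG
  have hexp : ⟪b, x - w⟫ + 1 / 2 * ⟪x - w, H (x - w)⟫ =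
      ⟪b, x⟫ + 1 / 2 * ⟪x, H x⟫ - ⟪G, w⟫ + 1 / 2 * ⟪w, H w⟫ := by
    simp only [map_sub, inner_sub_left, inner_sub_right, hG, inner_add_left]
    rw [← hsym x w, real_inner_comm w (H x)]
    ring
  have hwneg : ⟪w, H w⟫ ≤ 0 := hHneg w
  -- decompose g = G + (g - G)
  have hGw : ⟪G, w⟫ = η * (⟪G, e⟫ + ‖G‖ ^ 2 + ⟪G, g - G⟫) := by
    rw [hw, real_inner_smul_right]
    have : g + e = G + (g - G) + e := by abel
    rw [this, inner_add_right, inner_add_right, real_inner_self_eq_norm_sq]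
    ring
  have habs : |⟪G, g - G⟫| ≤ ‖G‖ * ‖g - G‖ := abs_real_inner_le_norm G (g - G)
  have hnorm : ‖g - G‖ ≤ ρ * B ^ 2 / 2 := he
  have hnn : (0:ℝ) ≤ ‖g - G‖ := norm_nonneg _
  have hbound : -⟪G, g - G⟫ ≤ ‖G‖ ^ 2 / 8 + ρ ^ 2 * B ^ 4 / 2 := by
    nlinarith [sq_nonneg (‖G‖ - 4 * ‖g - G‖), abs_le.mp habs, norm_nonneg G]
  rw [hexp, hGw]
  nlinarith [hη.le]

/-- For a symmetric negative semidefinite `H`, `g(v) = ⟨b,v⟩ + ½⟨v,Hv⟩`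
(so `∇g(v) = b + Hv`), and an inexact-gradient iteration
`v^{k+1} = v^k - η(γ^k + ξ^{k+1})` with `‖γ^k - ∇g(v^k)‖ ≤ ρB²/2`, one has
`g(v^K) ≤ g(v⁰) - η ∑_{k=1}^K ⟨∇g(v^{k-1}), ξ^k⟩ - (7η/8) ∑_{k=0}^{K-1} ‖∇g(v^k)‖² + ρ²B⁴ηK/2`. -/
theorem concave_part_descent {d : ℕ} (hd : 1 ≤ d)
    (H : EuclideanSpace ℝ (Fin d) →L[ℝ] EuclideanSpace ℝ (Fin d))
    (hHsym : IsSelfAdjoint H)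
    (hHneg : ∀ v : EuclideanSpace ℝ (Fin d), ⟪v, H v⟫ ≤ 0)
    (b : EuclideanSpace ℝ (Fin d)) (η ρ B : ℝ)
    (hη : 0 < η) (hρ : 0 < ρ) (hB : 0 < B) (K : ℕ)
    (v γ ξ : ℕ → EuclideanSpace ℝ (Fin d))
    (hrec : ∀ k < K, v (k + 1) = v k - η • (γ k + ξ (k + 1)))
    (hγ : ∀ k < K, ‖γ k - (b + H (v k))‖ ≤ ρ * B ^ 2 / 2) :
    ⟪b, v K⟫ + 1 / 2 * ⟪v K, H (v K)⟫ ≤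
      (⟪b, v 0⟫ + 1 / 2 * ⟪v 0, H (v 0)⟫)
        - η * ∑ k ∈ Finset.Icc 1 K, ⟪b + H (v (k - 1)), ξ k⟫
        - 7 * η / 8 * ∑ k ∈ Finset.range K, ‖b + H (v k)‖ ^ 2
        + ρ ^ 2 * B ^ 4 * η * K / 2 := by
  induction K with
  | zero => simp
  | succ K ih =>
    have ih' := ih (fun k hk => hrec k (Nat.lt_succ_of_lt hk))
      (fun k hk => hγ k (Nat.lt_succ_of_lt hk))
    have hstep := cpd_step H hHsym hHneg b η ρ B hη (v K) (γ K) (ξ (K + 1))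
      (hγ K (Nat.lt_succ_self K))
    rw [← hrec K (Nat.lt_succ_self K)] at hstep
    rw [Finset.sum_Icc_succ_top (Nat.one_le_iff_ne_zero.mpr (Nat.succ_ne_zero K)),
      Finset.sum_range_succ]
    simp only [Nat.add_sub_cancel] at *
    push_cast
    linarith
end

section
/- (Vector-martingale Azuma–Hoeffding inequality of Pinelis.) Let (Ω, F, P) be a probability space with a filtration F⁰ ⊆ F¹ ⊆ … ⊆ F^K, and let ε₁, …, ε_K be an ℝ^d-valued martingale difference sequence: each ε_k is F^k-measurable with E[ε_k | F^{k−1}] = 0, and ‖ε_k‖ ≤ B_k almost surely for constants B_k > 0. Then for every λ > 0: P(‖Σ_{k=1}^K ε_k‖ ≥ λ) ≤ 4·exp(−λ²/(4·Σ_{k=1}^K B_k²)). The bound is dimension-free. -/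
/-!
Pinelis' potential argument. For `‖y‖ ≤ b` and `r = √(‖x‖² + b²)` one has
`‖x + y‖ ≤ r + ⟪x, y⟫ / r`, where `|⟪x, y⟫ / r| ≤ b`; convexity of `exp` then bounds
`cosh (s ‖x + y‖)` by `cosh (s r) cosh (s b)` plus a term linear in `y`, and comparing power
series gives `cosh (s r) ≤ cosh (s ‖x‖) cosh (s b)`. The coefficient of the linear term is a
function of `x` alone, so for a martingale increment it integrates to zero, and
`E cosh (s ‖∑ ε_k‖) ≤ ∏ cosh (s B_k)² ≤ exp (s² ∑ B_k²)` by induction. Markov's inequality for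
`cosh (s ‖∑ ε_k‖)` with `s = λ / (2 ∑ B_k²)` finishes the proof.
-/

open MeasureTheory ProbabilityTheory Real Finset
open scoped Nat RealInnerProductSpace

theorem Nat.choose_le_choose_two_mul {n k : ℕ} : n.choose k ≤ (2 * n).choose (2 * k) := by
  rw [two_mul n, Nat.add_choose_eq]
  calc n.choose k ≤ n.choose k * n.choose k := Nat.le_mul_self _
    _ ≤ ∑ ij ∈ antidiagonal (2 * k), n.choose ij.1 * n.choose ij.2 :=
      single_le_sum (f := fun ij : ℕ × ℕ => n.choose ij.1 * n.choose ij.2)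
        (a := (k, k)) (fun _ _ => Nat.zero_le _)
        (by simp [HasAntidiagonal.mem_antidiagonal, two_mul])

theorem Nat.add_choose_mul_factorial_two_mul_le (i j : ℕ) :
    (i + j).choose i * ((2 * i)! * (2 * j)!) ≤ (2 * (i + j))! := by
  calc (i + j).choose i * ((2 * i)! * (2 * j)!)
      ≤ (2 * i + 2 * j).choose (2 * i) * ((2 * i)! * (2 * j)!) := by
        gcongr
        rw [← mul_add]
        exact Nat.choose_le_choose_two_mul
    _ = (2 * (i + j))! := by
        rw [mul_add, ← Nat.add_choose_mul_factorial_mul_factorial, Nat.choose_symm_add]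
        ring

theorem Real.add_pow_div_factorial_two_mul_le {a c : ℝ} (ha : 0 ≤ a) (hc : 0 ≤ c) (n : ℕ) :
    (a + c) ^ n / (2 * n)! ≤
      ∑ ij ∈ antidiagonal n, a ^ ij.1 / (2 * ij.1)! * (c ^ ij.2 / (2 * ij.2)!) := by
  rw [(Commute.all a c).add_pow', sum_div]
  refine sum_le_sum fun ij hij => ?_
  rw [HasAntidiagonal.mem_antidiagonal] at hij
  subst hij
  have hfac := Nat.add_choose_mul_factorial_two_mul_le ij.1 ij.2
  rw [nsmul_eq_mul, div_mul_div_comm, div_le_div_iff₀ (by positivity) (by positivity)]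
  calc _ = a ^ ij.1 * c ^ ij.2 *
        (((ij.1 + ij.2).choose ij.1 * ((2 * ij.1)! * (2 * ij.2)!) : ℕ) : ℝ) := by
        push_cast; ring
    _ ≤ _ := mul_le_mul_of_nonneg_left (by exact_mod_cast hfac) (by positivity)

theorem Real.hasSum_cosh_sqrt {a : ℝ} (ha : 0 ≤ a) :
    HasSum (fun n => a ^ n / (2 * n)!) (cosh √a) := by
  refine (hasSum_cosh √a).congr_fun fun n => ?_
  rw [pow_mul, sq_sqrt ha]

theorem Real.cosh_sqrt_add_le {a c : ℝ} (ha : 0 ≤ a) (hc : 0 ≤ c) :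
    cosh √(a + c) ≤ cosh √a * cosh √c := by
  have hA := hasSum_cosh_sqrt ha
  have hC := hasSum_cosh_sqrt hc
  have hAC := hasSum_cosh_sqrt (add_nonneg ha hc)
  have hprod : Summable fun ij : ℕ × ℕ => a ^ ij.1 / (2 * ij.1)! * (c ^ ij.2 / (2 * ij.2)!) := by
    refine hA.summable.mul_of_nonneg hC.summable (fun n => ?_) (fun n => ?_) <;> positivity
  rw [← hA.tsum_eq, ← hC.tsum_eq, ← hAC.tsum_eq,
    hA.summable.tsum_mul_tsum_eq_tsum_sum_antidiagonal hC.summable hprod]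
  exact hAC.summable.tsum_le_tsum (add_pow_div_factorial_two_mul_le ha hc)
    (summable_sum_mul_antidiagonal_of_summable_mul (f := fun n => a ^ n / (2 * n)!)
      (g := fun n => c ^ n / (2 * n)!) hprod)

theorem Real.cosh_add_mul_le {u : ℝ} (hu : |u| ≤ 1) (a c : ℝ) :
    cosh (a + u * c) ≤ cosh a * cosh c + u * (sinh a * sinh c) := by
  have hpos := exp_mul_le_cosh_add_mul_sinh hu c
  have hneg := exp_mul_le_cosh_add_mul_sinh (abs_neg u ▸ hu) c
  have key : cosh (a + u * c) = (exp a * exp (u * c) + exp (-a) * exp (-u * c)) / 2 := by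
    rw [cosh_eq, ← exp_add, ← exp_add]; ring_nf
  rw [key, cosh_eq a, sinh_eq a]
  nlinarith [mul_le_mul_of_nonneg_left hpos (exp_pos a).le,
    mul_le_mul_of_nonneg_left hneg (exp_pos (-a)).le]

theorem Real.abs_sinh_le_cosh (x : ℝ) : |sinh x| ≤ cosh x := by
  rw [abs_sinh, ← cosh_abs]
  exact (sinh_lt_cosh _).le

theorem Real.prod_cosh_sq_le_exp {ι : Type*} (t : Finset ι) (s : ℝ) (B : ι → ℝ) :
    ∏ k ∈ t, cosh (s * B k) ^ 2 ≤ exp (s ^ 2 * ∑ k ∈ t, B k ^ 2) := by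
  rw [mul_sum, exp_sum]
  refine prod_le_prod (fun _ _ => by positivity) fun k _ => ?_
  calc cosh (s * B k) ^ 2 ≤ exp ((s * B k) ^ 2 / 2) ^ 2 := by gcongr; exact cosh_le_exp_half_sq _
    _ = exp (s ^ 2 * B k ^ 2) := by rw [← exp_nat_mul]; ring_nf

section InnerProductSpace

variable {E : Type*} [NormedAddCommGroup E] [InnerProductSpace ℝ E]

theorem norm_add_le_sqrt_add_inner_div (x : E) {y : E} {b : ℝ} (hb : 0 < b) (hy : ‖y‖ ≤ b) :
    ‖x + y‖ ≤ √(‖x‖ ^ 2 + b ^ 2) + ⟪x, y⟫ / √(‖x‖ ^ 2 + b ^ 2) := by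
  set r := √(‖x‖ ^ 2 + b ^ 2)
  have hr2 : r ^ 2 = ‖x‖ ^ 2 + b ^ 2 := sq_sqrt (by positivity)
  have hr : 0 < r := by positivity
  have hinner : |⟪x, y⟫| ≤ ‖x‖ * b :=
    (abs_real_inner_le_norm x y).trans (mul_le_mul_of_nonneg_left hy (norm_nonneg x))
  have hnonneg : 0 ≤ r + ⟪x, y⟫ / r := by
    rw [← mul_le_mul_iff_of_pos_right hr, add_mul, div_mul_cancel₀ _ hr.ne', zero_mul]
    nlinarith [abs_le.mp hinner, sq_nonneg (‖x‖ - b)]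
  refine le_of_pow_le_pow_left₀ two_ne_zero hnonneg ?_
  calc ‖x + y‖ ^ 2 = ‖x‖ ^ 2 + 2 * ⟪x, y⟫ + ‖y‖ ^ 2 := norm_add_sq_real x y
    _ ≤ r ^ 2 + 2 * ⟪x, y⟫ := by nlinarith [norm_nonneg y]
    _ ≤ (r + ⟪x, y⟫ / r) ^ 2 := by
      rw [add_sq, mul_assoc, mul_div_cancel₀ _ hr.ne']
      nlinarith [sq_nonneg (⟪x, y⟫ / r)]

/-- `coshNormWeight s b ‖x‖ • x` is `sinh (s * b) / (s * b)` times the gradient of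
`x ↦ cosh (s * √(‖x‖ ^ 2 + b ^ 2))`. -/
noncomputable def coshNormWeight (s b t : ℝ) : ℝ :=
  sinh (s * √(t ^ 2 + b ^ 2)) * sinh (s * b) / (√(t ^ 2 + b ^ 2) * b)

theorem measurable_coshNormWeight (s b : ℝ) : Measurable (coshNormWeight s b) := by
  unfold coshNormWeight
  fun_prop

theorem abs_coshNormWeight_le (s : ℝ) {b t M : ℝ} (hb : 0 < b) (ht : |t| ≤ M) :
    |coshNormWeight s b t| ≤ cosh (s * (M + b)) * cosh (s * b) / b ^ 2 := by
  set r := √(t ^ 2 + b ^ 2)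
  have hbr : b ≤ r := le_sqrt_of_sq_le (by nlinarith)
  have hrM : r ≤ M + b := by
    refine sqrt_le_iff.mpr ⟨by linarith [abs_nonneg t], ?_⟩
    nlinarith [sq_abs t, abs_nonneg t]
  have hcosh : cosh (s * r) ≤ cosh (s * (M + b)) := by
    rw [cosh_le_cosh, abs_mul, abs_mul, abs_of_pos (hb.trans_le hbr),
      abs_of_pos (by linarith : 0 < M + b)]
    gcongr
  rw [coshNormWeight, abs_div, abs_mul, abs_mul, abs_of_pos (by positivity : 0 < r),
    abs_of_pos hb, div_le_div_iff₀ (by positivity) (by positivity)]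
  refine mul_le_mul (mul_le_mul ((abs_sinh_le_cosh _).trans hcosh) (abs_sinh_le_cosh _)
    (abs_nonneg _) (cosh_pos _).le) (by nlinarith) (by positivity) (by positivity)

theorem cosh_mul_norm_add_le (s : ℝ) (x : E) {y : E} {b : ℝ} (hb : 0 < b) (hy : ‖y‖ ≤ b) :
    cosh (s * ‖x + y‖) ≤
      cosh (s * ‖x‖) * cosh (s * b) ^ 2 + coshNormWeight s b ‖x‖ * ⟪x, y⟫ := by
  set r := √(‖x‖ ^ 2 + b ^ 2)
  have hr : 0 < r := by positivity
  have hxr : ‖x‖ ≤ r := le_sqrt_of_sq_le (by nlinarith)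
  set u := ⟪x, y⟫ / (r * b)
  have hu : |u| ≤ 1 := by
    rw [abs_div, abs_of_pos (mul_pos hr hb), div_le_one (mul_pos hr hb)]
    calc |⟪x, y⟫| ≤ ‖x‖ * ‖y‖ := abs_real_inner_le_norm x y
      _ ≤ r * b := by gcongr
  have hnorm : ‖x + y‖ ≤ r + u * b := by
    convert norm_add_le_sqrt_add_inner_div x hb hy using 2
    simp only [u, r]
    field_simp
  have hcosh_r : cosh (s * r) ≤ cosh (s * ‖x‖) * cosh (s * b) := by
    have h := cosh_sqrt_add_le (sq_nonneg (s * ‖x‖)) (sq_nonneg (s * b))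
    rw [sqrt_sq_eq_abs, sqrt_sq_eq_abs, cosh_abs, cosh_abs, mul_pow, mul_pow, ← mul_add,
      sqrt_mul (sq_nonneg s), sqrt_sq_eq_abs] at h
    rwa [← cosh_abs, abs_mul, abs_of_pos hr]
  have hweight : u * (sinh (s * r) * sinh (s * b)) = coshNormWeight s b ‖x‖ * ⟪x, y⟫ := by
    rw [coshNormWeight]
    ring
  calc cosh (s * ‖x + y‖) ≤ cosh (s * r + u * (s * b)) := by
        rw [cosh_le_cosh, abs_mul, show s * r + u * (s * b) = s * (r + u * b) by ring, abs_mul,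
          abs_norm, abs_of_nonneg ((norm_nonneg _).trans hnorm)]
        gcongr
    _ ≤ cosh (s * r) * cosh (s * b) + u * (sinh (s * r) * sinh (s * b)) :=
        cosh_add_mul_le hu _ _
    _ ≤ cosh (s * ‖x‖) * cosh (s * b) ^ 2 + coshNormWeight s b ‖x‖ * ⟪x, y⟫ := by
        rw [hweight, sq, ← mul_assoc]
        gcongr

end InnerProductSpace

section Probability

variable {E : Type*} [NormedAddCommGroup E] {Ω : Type*} {m m0 : MeasurableSpace Ω} {μ : Measure Ω}

theorem integrable_cosh_mul_norm [IsFiniteMeasure μ] (s : ℝ) {X : Ω → E} {M : ℝ}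
    (hX : AEStronglyMeasurable X μ) (hXM : ∀ᵐ ω ∂μ, ‖X ω‖ ≤ M) :
    Integrable (fun ω => cosh (s * ‖X ω‖)) μ := by
  refine ⟨continuous_cosh.comp_aestronglyMeasurable (hX.norm.const_mul s),
    .of_bounded (C := cosh (s * M)) ?_⟩
  filter_upwards [hXM] with ω hω
  rw [norm_of_nonneg (cosh_pos _).le, cosh_le_cosh, abs_mul, abs_mul, abs_norm]
  gcongr
  exact hω.trans (le_abs_self M)

theorem ae_norm_sum_le {ι : Type*} (t : Finset ι) {X : ι → Ω → E} {B : ι → ℝ}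
    (hXB : ∀ k ∈ t, ∀ᵐ ω ∂μ, ‖X k ω‖ ≤ B k) :
    ∀ᵐ ω ∂μ, ‖∑ k ∈ t, X k ω‖ ≤ ∑ k ∈ t, B k := by
  filter_upwards [(Filter.eventually_all_finset t).mpr hXB] with ω hω
  exact (norm_sum_le _ _).trans (sum_le_sum hω)

theorem measureReal_le_norm_le_exp_mul_integral_cosh [IsFiniteMeasure μ] {X : Ω → E} {s : ℝ}
    (hs : 0 ≤ s) (hint : Integrable (fun ω => cosh (s * ‖X ω‖)) μ) (lam : ℝ) :
    μ.real {ω | lam ≤ ‖X ω‖} ≤ 2 * exp (-(s * lam)) * ∫ ω, cosh (s * ‖X ω‖) ∂μ := by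
  have hsub : {ω | lam ≤ ‖X ω‖} ⊆ {ω | exp (s * lam) / 2 ≤ cosh (s * ‖X ω‖)} := fun ω hω => by
    have := exp_le_exp.mpr (mul_le_mul_of_nonneg_left (hω : lam ≤ ‖X ω‖) hs)
    change exp (s * lam) / 2 ≤ cosh (s * ‖X ω‖)
    linarith [cosh_eq (s * ‖X ω‖), exp_pos (-(s * ‖X ω‖))]
  have hmarkov := mul_meas_ge_le_integral_of_nonneg
    (.of_forall fun ω => (cosh_pos (s * ‖X ω‖)).le) hint (exp (s * lam) / 2)
  calc μ.real {ω | lam ≤ ‖X ω‖} ≤ μ.real {ω | exp (s * lam) / 2 ≤ cosh (s * ‖X ω‖)} :=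
        measureReal_mono hsub
    _ ≤ (∫ ω, cosh (s * ‖X ω‖) ∂μ) / (exp (s * lam) / 2) :=
        (le_div_iff₀' (by positivity)).mpr hmarkov
    _ = 2 * exp (-(s * lam)) * ∫ ω, cosh (s * ‖X ω‖) ∂μ := by
        rw [exp_neg]
        field_simp

variable [InnerProductSpace ℝ E]

theorem integral_inner_eq_zero_of_condExp_eq_zero [CompleteSpace E] (hm : m ≤ m0)
    [SigmaFinite (μ.trim hm)] {Z Y : Ω → E} (hZ : StronglyMeasurable[m] Z)
    (hZY : Integrable (fun ω => ⟪Z ω, Y ω⟫) μ) (hY : Integrable Y μ) (hY0 : μ[Y|m] =ᵐ[μ] 0) :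
    ∫ ω, ⟪Z ω, Y ω⟫ ∂μ = 0 := by
  rw [← integral_condExp hm]
  calc ∫ ω, (μ[fun ω => ⟪Z ω, Y ω⟫|m]) ω ∂μ = ∫ ω, ⟪Z ω, (μ[Y|m]) ω⟫ ∂μ :=
        integral_congr_ae (condExp_bilin_of_stronglyMeasurable_left (innerSL ℝ) hZ hZY hY)
    _ = 0 := by
        rw [integral_congr_ae (hY0.mono fun ω h => by rw [h, Pi.zero_apply, inner_zero_right])]
        exact integral_zero _ _

theorem integral_cosh_mul_norm_add_le [CompleteSpace E] [IsFiniteMeasure μ] (hm : m ≤ m0)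
    (s : ℝ) {X Y : Ω → E} {M b : ℝ} (hX : StronglyMeasurable[m] X) (hXM : ∀ᵐ ω ∂μ, ‖X ω‖ ≤ M)
    (hY : AEStronglyMeasurable Y μ) (hYb : ∀ᵐ ω ∂μ, ‖Y ω‖ ≤ b) (hY0 : μ[Y|m] =ᵐ[μ] 0) :
    ∫ ω, cosh (s * ‖X ω + Y ω‖) ∂μ ≤ cosh (s * b) ^ 2 * ∫ ω, cosh (s * ‖X ω‖) ∂μ := by
  have hXi := integrable_cosh_mul_norm s (hX.mono hm).aestronglyMeasurable hXM
  rcases le_or_gt b 0 with hb | hb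
  · have hY_zero : ∀ᵐ ω ∂μ, Y ω = 0 := hYb.mono fun ω h => norm_le_zero_iff.mp (h.trans hb)
    rw [integral_congr_ae (hY_zero.mono fun ω h => by rw [h, add_zero])]
    exact le_mul_of_one_le_left (integral_nonneg fun _ => (cosh_pos _).le)
      (one_le_pow₀ (one_le_cosh _))
  set Z : Ω → E := fun ω => coshNormWeight s b ‖X ω‖ • X ω
  have hZ : StronglyMeasurable[m] Z :=
    ((measurable_coshNormWeight s b).comp hX.norm.measurable).stronglyMeasurable.smul hX
  have hZY : Integrable (fun ω => ⟪Z ω, Y ω⟫) μ := by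
    refine ⟨(hZ.mono hm).aestronglyMeasurable.inner hY, .of_bounded
      (C := cosh (s * (M + b)) * cosh (s * b) / b ^ 2 * M * b) ?_⟩
    filter_upwards [hXM, hYb] with ω hXω hYω
    have hM : 0 ≤ M := (norm_nonneg _).trans hXω
    rw [norm_eq_abs, real_inner_smul_left, abs_mul, mul_assoc]
    gcongr
    · exact abs_coshNormWeight_le s hb ((abs_norm _).trans_le hXω)
    · exact (abs_real_inner_le_norm _ _).trans (mul_le_mul hXω hYω (norm_nonneg _) hM)
  have hpointwise : ∀ᵐ ω ∂μ,
      cosh (s * ‖X ω + Y ω‖) ≤ cosh (s * ‖X ω‖) * cosh (s * b) ^ 2 + ⟪Z ω, Y ω⟫ :=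
    hYb.mono fun ω h => by
      simpa only [Z, real_inner_smul_left] using cosh_mul_norm_add_le s (X ω) hb h
  have hXYi : Integrable (fun ω => cosh (s * ‖X ω + Y ω‖)) μ :=
    integrable_cosh_mul_norm s ((hX.mono hm).aestronglyMeasurable.add hY)
      (hXM.and hYb |>.mono fun ω h => (norm_add_le _ _).trans (add_le_add h.1 h.2))
  calc ∫ ω, cosh (s * ‖X ω + Y ω‖) ∂μ
      ≤ ∫ ω, (cosh (s * ‖X ω‖) * cosh (s * b) ^ 2 + ⟪Z ω, Y ω⟫) ∂μ :=
        integral_mono_ae hXYi ((hXi.mul_const _).add hZY) hpointwise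
    _ = cosh (s * b) ^ 2 * ∫ ω, cosh (s * ‖X ω‖) ∂μ := by
        rw [integral_add (hXi.mul_const _) hZY, integral_mul_const,
          integral_inner_eq_zero_of_condExp_eq_zero hm hZ hZY
            ⟨hY, .of_bounded hYb⟩ hY0, add_zero, mul_comm]

theorem integral_cosh_mul_norm_sum_le [CompleteSpace E] [IsProbabilityMeasure μ]
    (ℱ : Filtration ℕ m0) (ε : ℕ → Ω → E) (B : ℕ → ℝ) (s : ℝ) (n : ℕ)
    (hadapted : ∀ k, 1 ≤ k → k ≤ n → StronglyMeasurable[ℱ k] (ε k))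
    (hmds : ∀ k, 1 ≤ k → k ≤ n → μ[ε k|ℱ (k - 1)] =ᵐ[μ] 0)
    (hbdd : ∀ k, 1 ≤ k → k ≤ n → ∀ᵐ ω ∂μ, ‖ε k ω‖ ≤ B k) :
    ∫ ω, cosh (s * ‖∑ k ∈ Icc 1 n, ε k ω‖) ∂μ ≤ ∏ k ∈ Icc 1 n, cosh (s * B k) ^ 2 := by
  induction n with
  | zero => simp
  | succ n ih =>
    have hS : StronglyMeasurable[ℱ n] fun ω => ∑ k ∈ Icc 1 n, ε k ω :=
      Finset.stronglyMeasurable_fun_sum _ fun k hk =>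
        (hadapted k (mem_Icc.mp hk).1 ((mem_Icc.mp hk).2.trans n.le_succ)).mono
          (ℱ.mono (mem_Icc.mp hk).2)
    have hSB := ae_norm_sum_le (μ := μ) (Icc 1 n) (X := ε) (B := B) fun k hk =>
      hbdd k (mem_Icc.mp hk).1 ((mem_Icc.mp hk).2.trans n.le_succ)
    simp only [sum_Icc_succ_top (Nat.le_add_left 1 n), prod_Icc_succ_top (Nat.le_add_left 1 n)]
    calc ∫ ω, cosh (s * ‖∑ k ∈ Icc 1 n, ε k ω + ε (n + 1) ω‖) ∂μ
        ≤ cosh (s * B (n + 1)) ^ 2 * ∫ ω, cosh (s * ‖∑ k ∈ Icc 1 n, ε k ω‖) ∂μ :=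
          integral_cosh_mul_norm_add_le (ℱ.le n) s hS hSB
            ((hadapted (n + 1) le_add_self le_rfl).mono (ℱ.le _)).aestronglyMeasurable
            (hbdd (n + 1) le_add_self le_rfl) (hmds (n + 1) le_add_self le_rfl)
      _ ≤ (∏ k ∈ Icc 1 n, cosh (s * B k) ^ 2) * cosh (s * B (n + 1)) ^ 2 := by
          rw [mul_comm]
          gcongr
          exact ih (fun k h1 h2 => hadapted k h1 (by omega)) (fun k h1 h2 => hmds k h1 (by omega))
            (fun k h1 h2 => hbdd k h1 (by omega))

end Probability

theorem pinelis_azuma_hoeffding_general {d : ℕ}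
    {Ω : Type*} {m0 : MeasurableSpace Ω} (P : Measure Ω) [IsProbabilityMeasure P]
    (ℱ : Filtration ℕ m0) (K : ℕ)
    (ε : ℕ → Ω → EuclideanSpace ℝ (Fin d)) (B : ℕ → ℝ)
    (hadapted : ∀ k, 1 ≤ k → k ≤ K → StronglyMeasurable[ℱ k] (ε k))
    (hmds : ∀ k, 1 ≤ k → k ≤ K → P[ε k|ℱ (k - 1)] =ᵐ[P] 0)
    (hbdd : ∀ k, 1 ≤ k → k ≤ K → ∀ᵐ ω ∂P, ‖ε k ω‖ ≤ B k)
    (lam : ℝ) (hlam : 0 < lam) :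
    P {ω | lam ≤ ‖∑ k ∈ Finset.Icc 1 K, ε k ω‖} ≤
      ENNReal.ofReal
        (4 * Real.exp (-lam ^ 2 / (4 * ∑ k ∈ Finset.Icc 1 K, B k ^ 2))) := by
  set V := ∑ k ∈ Icc 1 K, B k ^ 2
  have hV0 : 0 ≤ V := sum_nonneg fun k _ => sq_nonneg (B k)
  rcases hV0.eq_or_lt with hV | hV
  · -- `-lam ^ 2 / 0 = 0`, so the bound is `4`
    rw [← hV, mul_zero, div_zero, exp_zero]
    exact prob_le_one.trans (by norm_num)
  set s := lam / (2 * V)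
  have hint : Integrable (fun ω => cosh (s * ‖∑ k ∈ Icc 1 K, ε k ω‖)) P :=
    integrable_cosh_mul_norm s
      (Finset.aestronglyMeasurable_fun_sum _ fun k hk =>
        ((hadapted k (mem_Icc.mp hk).1 (mem_Icc.mp hk).2).mono (ℱ.le k)).aestronglyMeasurable)
      (ae_norm_sum_le _ fun k hk => hbdd k (mem_Icc.mp hk).1 (mem_Icc.mp hk).2)
  have hbound : P.real {ω | lam ≤ ‖∑ k ∈ Icc 1 K, ε k ω‖} ≤
      2 * exp (-(s * lam)) * exp (s ^ 2 * V) :=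
    (measureReal_le_norm_le_exp_mul_integral_cosh (by positivity) hint lam).trans <| by
      gcongr
      exact (integral_cosh_mul_norm_sum_le ℱ ε B s K hadapted hmds hbdd).trans
        (prod_cosh_sq_le_exp _ s B)
  have hexponent : -(s * lam) + s ^ 2 * V = -lam ^ 2 / (4 * V) := by
    simp only [s]
    field_simp
    ring
  rw [← ofReal_measureReal]
  refine ENNReal.ofReal_le_ofReal (hbound.trans ?_)
  rw [mul_assoc, ← exp_add, hexponent]
  gcongr
  norm_num

/-- Pinelis' vector-martingale Azuma–Hoeffding inequality:
For an `ℝ^d`-valued martingale difference sequence `ε₁, …, ε_K` with `‖ε_k‖ ≤ B_k` a.s.,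
`P(‖∑ ε_k‖ ≥ λ) ≤ 4 exp(-λ²/(4 ∑ B_k²))` — a dimension-free bound. -/
theorem pinelis_azuma_hoeffding {d : ℕ} (hd : 1 ≤ d)
    {Ω : Type*} {m0 : MeasurableSpace Ω} (P : Measure Ω) [IsProbabilityMeasure P]
    (ℱ : Filtration ℕ m0) (K : ℕ)
    (ε : ℕ → Ω → EuclideanSpace ℝ (Fin d)) (B : ℕ → ℝ)
    (hB : ∀ k, 1 ≤ k → k ≤ K → 0 < B k)
    (hadapted : ∀ k, 1 ≤ k → k ≤ K → StronglyMeasurable[ℱ k] (ε k))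
    (hmds : ∀ k, 1 ≤ k → k ≤ K → P[ε k|ℱ (k - 1)] =ᵐ[P] 0)
    (hbdd : ∀ k, 1 ≤ k → k ≤ K → ∀ᵐ ω ∂P, ‖ε k ω‖ ≤ B k)
    (lam : ℝ) (hlam : 0 < lam) :
    P {ω | lam ≤ ‖∑ k ∈ Finset.Icc 1 K, ε k ω‖} ≤
      ENNReal.ofReal
        (4 * Real.exp (-lam ^ 2 / (4 * ∑ k ∈ Finset.Icc 1 K, B k ^ 2))) :=
  pinelis_azuma_hoeffding_general P ℱ K ε B hadapted hmds hbdd lam hlam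
end
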